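/- Starting from the major triad with root 0 in Z/24 and alternately applying R then L (i.e., iterating the composition L∘R), the orbit under the cyclic group generated by L∘R together with one application of R has size 24 and consists of all 24 consonant triads with even roots; in particular (L∘R)^12 is the identity on consonant triads and (L∘R)^k for 0 ≤ k < 12 are pairwise distinct. -/
import Mathlib


abbrev Tri := ZMod 24 × ZMod 24 × ZMod 24

def If (n : ZMod 24) : ZMod 24 → ZMod 24 := fun y => -y + n

def L (t : Tri) : Tri :=
  (If (t.2.1 + t.2.2) t.1, If (t.2.1 + t.2.2) t.2.1, If (t.2.1 + t.2.2) t.2.2)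

def R (t : Tri) : Tri :=
  (If (t.1 + t.2.1) t.1, If (t.1 + t.2.1) t.2.1, If (t.1 + t.2.1) t.2.2)

def major (x : ZMod 24) : Tri := (x, x + 8, x + 14)

def toSet (t : Tri) : Set (ZMod 24) := {t.1, t.2.1, t.2.2}

/-- All (orderings of) consonant triads. -/
def Scons : Set Tri :=
  {t | ∃ x : ZMod 24, toSet t = {x, x + 8, x + 14} ∨ toSet t = {x, x + 6, x + 14}}

/-- The orbit of the major triad with root 0 under iterating `L ∘ R` together with one
application of `R`. -/
def O : Set Tri :=
  {t | ∃ k : ℕ, k < 12 ∧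
    (t = (L ∘ R)^[k] (major 0) ∨ t = R ((L ∘ R)^[k] (major 0)))}

lemma LR_apply (t : Tri) : (L ∘ R) t =
    (t.1 + (t.1 - t.2.2), t.2.1 + (t.1 - t.2.2), t.2.2 + (t.1 - t.2.2)) := by
  obtain ⟨a, b, c⟩ := t
  simp only [L, R, If, Function.comp]
  refine Prod.ext ?_ (Prod.ext ?_ ?_) <;> simp <;> ring

lemma iter_formula (k : ℕ) (t : Tri) : (L ∘ R)^[k] t =
    (t.1 + k * (t.1 - t.2.2), t.2.1 + k * (t.1 - t.2.2), t.2.2 + k * (t.1 - t.2.2)) := by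
  induction k with
  | zero => simp
  | succ n ih =>
    rw [Function.iterate_succ_apply', ih, LR_apply]
    obtain ⟨a, b, c⟩ := t
    push_cast
    refine Prod.ext ?_ (Prod.ext ?_ ?_) <;> simp <;> ring

def f (k : ℕ) : Tri := ((k : ZMod 24) * 10, (k : ZMod 24) * 10 + 8, (k : ZMod 24) * 10 + 14)
def g (k : ℕ) : Tri := ((k : ZMod 24) * 10 + 8, (k : ZMod 24) * 10, (k : ZMod 24) * 10 - 6)

lemma iter_major (k : ℕ) : (L ∘ R)^[k] (major 0) = f k := by
  have h : (-14 : ZMod 24) = 10 := by decide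
  rw [iter_formula]
  simp only [major, f]
  refine Prod.ext ?_ (Prod.ext ?_ ?_) <;> simp <;> linear_combination (k : ZMod 24) * h

lemma R_f (k : ℕ) : R (f k) = g k := by
  simp only [R, If, f, g]
  refine Prod.ext ?_ (Prod.ext ?_ ?_) <;> simp <;> ring

lemma O_eq : O = {t | ∃ k : ℕ, k < 12 ∧ (t = f k ∨ t = g k)} := by
  unfold O
  ext t
  simp only [Set.mem_setOf_eq, iter_major, R_f]

def F : Finset Tri := (Finset.range 12).image f ∪ (Finset.range 12).image g

lemma O_eq_F : O = ↑F := by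
  rw [O_eq]
  ext t
  simp only [F, Finset.coe_union, Set.mem_union, Finset.coe_image, Set.mem_image,
    Finset.mem_coe, Finset.mem_range, Set.mem_setOf_eq]
  constructor
  · rintro ⟨k, hk, h | h⟩
    · exact Or.inl ⟨k, hk, h.symm⟩
    · exact Or.inr ⟨k, hk, h.symm⟩
  · rintro (⟨k, hk, h⟩ | ⟨k, hk, h⟩)
    · exact ⟨k, hk, Or.inl h.symm⟩
    · exact ⟨k, hk, Or.inr h.symm⟩

example : F.card = 24 := by decide

lemma even_exists : ∀ r : ZMod 24, ∃ k : ℕ, k < 12 ∧ (k : ZMod 24) * 10 = r + r := by decide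

lemma set_rot (a : ZMod 24) : ({a + 8, a, a - 6} : Set (ZMod 24)) = {a - 6, a - 6 + 6, a - 6 + 14} := by
  have h1 : a - 6 + 6 = a := by ring
  have h2 : a - 6 + 14 = a + 8 := by ring
  rw [h1, h2]
  ext y; simp only [Set.mem_insert_iff, Set.mem_singleton_iff]; tauto

lemma aux4 : ∀ j : ℕ, j < 12 → ∀ k : ℕ, k < 12 →
    (j : ZMod 24) * 10 = (k : ZMod 24) * 10 → j = k := by decide


/-- Starting from the major triad with root 0 and alternately applying `R` and `L`,
the resulting orbit has 24 elements and consists of all 24 consonant triads with even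
roots; `(L ∘ R)^12` is the identity on consonant triads, and the iterates
`(L ∘ R)^k (major 0)` for `0 ≤ k < 12` are pairwise distinct. -/
theorem LR_orbit :
    O.ncard = 24 ∧
    toSet '' O = {s | ∃ x : ZMod 24, Even x ∧
      (s = {x, x + 8, x + 14} ∨ s = {x, x + 6, x + 14})} ∧
    (∀ t ∈ Scons, (L ∘ R)^[12] t = t) ∧
    (∀ j k : ℕ, j < 12 → k < 12 → j ≠ k →
      (L ∘ R)^[j] (major 0) ≠ (L ∘ R)^[k] (major 0)) := by
  refine ⟨?_, ?_, ?_, ?_⟩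
  · rw [O_eq_F, Set.ncard_coe_finset]
    decide
  · ext s
    simp only [Set.mem_image, Set.mem_setOf_eq]
    constructor
    · rintro ⟨t, ht, rfl⟩
      rw [O_eq] at ht
      obtain ⟨k, hk, h | h⟩ := ht
      · exact ⟨(k : ZMod 24) * 10, ⟨(k : ZMod 24) * 5, by ring⟩, Or.inl (by rw [h]; rfl)⟩
      · refine ⟨(k : ZMod 24) * 10 - 6, ⟨(k : ZMod 24) * 5 - 3, by ring⟩, Or.inr ?_⟩
        rw [h]
        show ({_, _, _} : Set (ZMod 24)) = _
        exact set_rot _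
    · rintro ⟨x, ⟨r, hr⟩, h | h⟩
      · obtain ⟨k, hk, hke⟩ := even_exists r
        refine ⟨f k, by rw [O_eq]; exact ⟨k, hk, Or.inl rfl⟩, ?_⟩
        rw [h, hr, ← hke]
        rfl
      · obtain ⟨k, hk, hke⟩ := even_exists (r + 3)
        have hx : x = (k : ZMod 24) * 10 - 6 := by rw [hr]; linear_combination -hke
        refine ⟨g k, by rw [O_eq]; exact ⟨k, hk, Or.inr rfl⟩, ?_⟩
        rw [h, hx]
        show ({_, _, _} : Set (ZMod 24)) = _
        exact set_rot _
  · rintro t ⟨x, h | h⟩ <;>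
    · first
      | (have h1 : t.1 ∈ ({x, x + 8, x + 14} : Set (ZMod 24)) := by
          rw [← h]; exact Or.inl rfl
         have h2 : t.2.2 ∈ ({x, x + 8, x + 14} : Set (ZMod 24)) := by
          rw [← h]; exact Or.inr (Or.inr rfl)
         have e1 : Even (t.1 - x) := by
          rcases h1 with h' | h' | h'
          exacts [⟨0, by rw [h']; ring⟩, ⟨4, by rw [h']; ring⟩, ⟨7, by rw [h']; ring⟩]
         have e2 : Even (t.2.2 - x) := by
          rcases h2 with h' | h' | h'
          exacts [⟨0, by rw [h']; ring⟩, ⟨4, by rw [h']; ring⟩, ⟨7, by rw [h']; ring⟩])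
      | (have h1 : t.1 ∈ ({x, x + 6, x + 14} : Set (ZMod 24)) := by
          rw [← h]; exact Or.inl rfl
         have h2 : t.2.2 ∈ ({x, x + 6, x + 14} : Set (ZMod 24)) := by
          rw [← h]; exact Or.inr (Or.inr rfl)
         have e1 : Even (t.1 - x) := by
          rcases h1 with h' | h' | h'
          exacts [⟨0, by rw [h']; ring⟩, ⟨3, by rw [h']; ring⟩, ⟨7, by rw [h']; ring⟩]
         have e2 : Even (t.2.2 - x) := by
          rcases h2 with h' | h' | h'
          exacts [⟨0, by rw [h']; ring⟩, ⟨3, by rw [h']; ring⟩, ⟨7, by rw [h']; ring⟩])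
      have hu : Even (t.1 - t.2.2) := by
        have heq2 : t.1 - t.2.2 = (t.1 - x) - (t.2.2 - x) := by ring
        rw [heq2]; exact e1.sub e2
      obtain ⟨r, hrr⟩ := hu
      have h0 : (24 : ZMod 24) = 0 := by decide
      rw [iter_formula]
      refine Prod.ext ?_ (Prod.ext ?_ ?_) <;> simp <;> rw [hrr] <;>
        push_cast <;> linear_combination r * h0
  · intro j k hj hk hne heq
    apply hne
    apply aux4 j hj k hk
    have := congrArg Prod.fst heq
    rwa [iter_major, iter_major] at this
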